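/- arXiv:1811.07429 — 3 statements merged into one kernel-verified Lean document; each statement's English description precedes it below -/
import Mathlib

section
/- Let f : ℝ^q × ℝ^q → ℝ^r be such that for every x, both f(x,·) and f(·,x) are C-Lipschitz. Define the elementary block T_f mapping a probability measure α on ℝ^q to the law of the random vector E_{X'∼α}[f(X, X')] where X ∼ α and X' is an independent copy. Then T_f is (2rC)-Lipschitz with respect to the 1-Wasserstein distance: W₁(T_f(α), T_f(β)) ≤ 2rC · W₁(α, β) for all probability measures α, β on ℝ^q with finite first moment. -/
open MeasureTheory
open scoped ENNReal NNReal

noncomputable def W1 {X : Type*} [MeasurableSpace X] [PseudoEMetricSpace X]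
    (α β : Measure X) : ℝ≥0∞ :=
  ⨅ (π : Measure (X × X)) (_ : π.map Prod.fst = α ∧ π.map Prod.snd = β),
    ∫⁻ p, edist p.1 p.2 ∂π

noncomputable def elemBlock {q r : ℕ}
    (f : EuclideanSpace ℝ (Fin q) → EuclideanSpace ℝ (Fin q) → EuclideanSpace ℝ (Fin r))
    (α : Measure (EuclideanSpace ℝ (Fin q))) : Measure (EuclideanSpace ℝ (Fin r)) :=
  α.map (fun x => ∫ x', f x x' ∂α)

section Aux

variable {q r : ℕ} {C : ℝ≥0}
  {f : EuclideanSpace ℝ (Fin q) → EuclideanSpace ℝ (Fin q) → EuclideanSpace ℝ (Fin r)}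

lemma aux_integrable_norm (α : Measure (EuclideanSpace ℝ (Fin q)))
    (hα : ∫⁻ x, ‖x‖₊ ∂α < ⊤) : Integrable (fun x : EuclideanSpace ℝ (Fin q) => ‖x‖) α := by
  refine ⟨continuous_norm.aestronglyMeasurable, ?_⟩
  simpa [HasFiniteIntegral, enorm_eq_nnnorm] using hα

lemma aux_integrable (hf1 : ∀ x, LipschitzWith C (f x))
    (α : Measure (EuclideanSpace ℝ (Fin q))) [IsProbabilityMeasure α]
    (hα : ∫⁻ x, ‖x‖₊ ∂α < ⊤) (x : EuclideanSpace ℝ (Fin q)) :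
    Integrable (fun x' => f x x') α := by
  refine Integrable.mono' (g := fun x' => ‖f x 0‖ + C * ‖x'‖)
    ((integrable_const _).add ((aux_integrable_norm α hα).const_mul C))
    (hf1 x).continuous.aestronglyMeasurable ?_
  filter_upwards with x'
  have h1 : dist (f x x') (f x 0) ≤ C * dist x' 0 := (hf1 x).dist_le_mul x' 0
  have h2 : ‖f x x'‖ - ‖f x 0‖ ≤ ‖f x x' - f x 0‖ := norm_sub_norm_le _ _
  rw [dist_eq_norm, dist_zero_right] at h1
  linarith

lemma aux_lip (hf2 : ∀ x, LipschitzWith C (fun y => f y x))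
    (α : Measure (EuclideanSpace ℝ (Fin q))) [IsProbabilityMeasure α]
    (hint : ∀ x, Integrable (fun x' => f x x') α) :
    LipschitzWith C (fun x => ∫ x', f x x' ∂α) := by
  refine LipschitzWith.of_dist_le_mul fun x y => ?_
  rw [dist_eq_norm, ← integral_sub (hint x) (hint y)]
  refine le_trans (norm_integral_le_integral_norm _) ?_
  have : ∫ x', ‖f x x' - f y x'‖ ∂α ≤ ∫ _x', (C : ℝ) * dist x y ∂α := by
    refine integral_mono_of_nonneg (Filter.Eventually.of_forall fun _ => norm_nonneg _)
      (integrable_const _) (Filter.Eventually.of_forall fun x' => ?_)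
    have := (hf2 x').dist_le_mul x y
    rwa [dist_eq_norm] at this
  simpa using this

end Aux

theorem elemBlock_lipschitz {q r : ℕ} (C : ℝ≥0)
    (f : EuclideanSpace ℝ (Fin q) → EuclideanSpace ℝ (Fin q) → EuclideanSpace ℝ (Fin r))
    (hf1 : ∀ x, LipschitzWith C (f x))
    (hf2 : ∀ x, LipschitzWith C (fun y => f y x))
    (α β : Measure (EuclideanSpace ℝ (Fin q)))
    [IsProbabilityMeasure α] [IsProbabilityMeasure β]
    (hα : ∫⁻ x, ‖x‖₊ ∂α < ⊤) (hβ : ∫⁻ x, ‖x‖₊ ∂β < ⊤) :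
    W1 (elemBlock f α) (elemBlock f β) ≤ (2 * r * C : ℝ≥0∞) * W1 α β := by
  classical
  set gα := fun x => ∫ x', f x x' ∂α with hgα
  set gβ := fun x => ∫ x', f x x' ∂β with hgβ
  have hintα : ∀ x, Integrable (fun x' => f x x') α := aux_integrable hf1 α hα
  have hintβ : ∀ x, Integrable (fun x' => f x x') β := aux_integrable hf1 β hβ
  have hlipα : LipschitzWith C gα := aux_lip hf2 α hintα
  have hlipβ : LipschitzWith C gβ := aux_lip hf2 β hintβ
  have hmα : Measurable gα := hlipα.continuous.measurable
  have hmβ : Measurable gβ := hlipβ.continuous.measurable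
  have hEA : elemBlock f α = α.map gα := rfl
  have hEB : elemBlock f β = β.map gβ := rfl
  -- degenerate case r = 0
  rcases Nat.eq_zero_or_pos r with hr | hr
  · subst hr
    haveI hsub : Subsingleton (EuclideanSpace ℝ (Fin 0)) :=
      ⟨fun a b => by ext i; exact i.elim0⟩
    haveI : IsProbabilityMeasure (α.map gα) := Measure.isProbabilityMeasure_map hmα.aemeasurable
    haveI : IsProbabilityMeasure (β.map gβ) := Measure.isProbabilityMeasure_map hmβ.aemeasurable
    refine le_trans ?_ zero_le
    rw [W1, hEA, hEB]
    refine le_trans (iInf₂_le ((α.map gα).prod (β.map gβ)) ⟨?_, ?_⟩) ?_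
    · exact le_of_eq
        ((lintegral_congr fun p => by rw [Subsingleton.elim p.1 p.2, edist_self]).trans
          lintegral_zero)
    · rw [Measure.map_fst_prod, measure_univ, one_smul]
    · rw [Measure.map_snd_prod, measure_univ, one_smul]
  -- degenerate case C = 0
  rcases eq_or_ne C 0 with hC | hC
  · subst hC
    have hconst : ∀ x y, f x y = f 0 0 := fun x y => by
      have h1 : f x y = f 0 y :=
        edist_le_zero.mp (by simpa using (hf2 y).edist_le_mul x 0)
      have h2 : f 0 y = f 0 0 :=
        edist_le_zero.mp (by simpa using (hf1 0).edist_le_mul y 0)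
      rw [h1, h2]
    have hga : gα = fun _ => f 0 0 := funext fun x => by
      rw [hgα]
      simp only
      rw [show (fun x' => f x x') = fun _ => f 0 0 from funext fun x' => hconst x x']
      simp
    have hgb : gβ = fun _ => f 0 0 := funext fun x => by
      rw [hgβ]
      simp only
      rw [show (fun x' => f x x') = fun _ => f 0 0 from funext fun x' => hconst x x']
      simp
    have heq : elemBlock f α = elemBlock f β := by
      rw [hEA, hEB, hga, hgb, Measure.map_const, Measure.map_const,
        measure_univ, measure_univ]
    refine le_trans ?_ zero_le
    rw [W1, ← heq]
    have hdiag : Measurable fun x : EuclideanSpace ℝ (Fin r) => (x, x) :=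
      measurable_id.prodMk measurable_id
    refine le_trans (iInf₂_le ((elemBlock f α).map (fun x => (x, x))) ⟨?_, ?_⟩) ?_
    · rw [lintegral_map (measurable_fst.edist measurable_snd) hdiag]
      simp
    · rw [Measure.map_map measurable_fst hdiag]
      exact Measure.map_id
    · rw [Measure.map_map measurable_snd hdiag]
      exact Measure.map_id
  -- main case
  have hk0 : (2 * r * C : ℝ≥0∞) ≠ 0 := by
    simp [hC, Nat.pos_iff_ne_zero.mp hr]
  have hktop : (2 * r * C : ℝ≥0∞) ≠ ⊤ := by
    finiteness
  conv_rhs => rw [W1]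
  rw [ENNReal.mul_iInf_of_ne hk0 hktop]
  refine le_iInf fun π => ?_
  rw [ENNReal.mul_iInf_of_ne hk0 hktop]
  refine le_iInf fun hπ => ?_
  obtain ⟨hπ1, hπ2⟩ := hπ
  set I := ∫⁻ p, edist p.1 p.2 ∂π with hI
  have hπprob : IsProbabilityMeasure π := by
    constructor
    have h : π Set.univ = (π.map Prod.fst) Set.univ := by
      rw [Measure.map_apply measurable_fst MeasurableSet.univ, Set.preimage_univ]
    rw [h, hπ1, measure_univ]
  rcases eq_or_ne I ⊤ with hItop | hItop
  · rw [hItop, ENNReal.mul_top hk0]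
    exact le_top
  have hdistint : Integrable (fun p : EuclideanSpace ℝ (Fin q) × EuclideanSpace ℝ (Fin q) =>
      dist p.1 p.2) π := by
    refine ⟨(continuous_fst.dist continuous_snd).aestronglyMeasurable, ?_⟩
    have h : ∀ p : EuclideanSpace ℝ (Fin q) × EuclideanSpace ℝ (Fin q),
        (‖dist p.1 p.2‖₊ : ℝ≥0∞) = edist p.1 p.2 := fun p => by
      rw [edist_dist, ← enorm_eq_nnnorm, Real.enorm_eq_ofReal dist_nonneg]
    rw [HasFiniteIntegral]
    calc ∫⁻ p, (‖dist p.1 p.2‖₊ : ℝ≥0∞) ∂π = I := by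
          rw [hI]; exact lintegral_congr fun p => h p
      _ < ⊤ := hItop.lt_top
  have hIeq : ENNReal.ofReal (∫ p, dist p.1 p.2 ∂π) = I := by
    rw [ofReal_integral_eq_lintegral_ofReal hdistint
      (Filter.Eventually.of_forall fun p => dist_nonneg), hI]
    exact lintegral_congr fun p => (edist_dist _ _).symm
  have hKey : ∀ y, ‖gα y - gβ y‖ ≤ (C : ℝ) * ∫ p, dist p.1 p.2 ∂π := by
    intro y
    have hfst : Integrable (fun p : EuclideanSpace ℝ (Fin q) × EuclideanSpace ℝ (Fin q) =>
        f y p.1) π := by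
      have h := hintα y
      rw [← hπ1] at h
      exact (integrable_map_measure (hf1 y).continuous.aestronglyMeasurable
        measurable_fst.aemeasurable).mp h
    have hsnd : Integrable (fun p : EuclideanSpace ℝ (Fin q) × EuclideanSpace ℝ (Fin q) =>
        f y p.2) π := by
      have h := hintβ y
      rw [← hπ2] at h
      exact (integrable_map_measure (hf1 y).continuous.aestronglyMeasurable
        measurable_snd.aemeasurable).mp h
    have e1 : gα y = ∫ p, f y p.1 ∂π := by
      rw [hgα]
      simp only
      rw [← hπ1, integral_map measurable_fst.aemeasurable
        (hf1 y).continuous.aestronglyMeasurable]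
    have e2 : gβ y = ∫ p, f y p.2 ∂π := by
      rw [hgβ]
      simp only
      rw [← hπ2, integral_map measurable_snd.aemeasurable
        (hf1 y).continuous.aestronglyMeasurable]
    rw [e1, e2, ← integral_sub hfst hsnd]
    refine le_trans (norm_integral_le_integral_norm _) ?_
    have h : ∫ p, ‖f y p.1 - f y p.2‖ ∂π ≤ ∫ p, (C : ℝ) * dist p.1 p.2 ∂π := by
      refine integral_mono_of_nonneg (Filter.Eventually.of_forall fun _ => norm_nonneg _)
        (hdistint.const_mul _) (Filter.Eventually.of_forall fun p => ?_)
      have := (hf1 y).dist_le_mul p.1 p.2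
      rwa [dist_eq_norm] at this
    rwa [integral_const_mul] at h
  have hKe : ∀ y, edist (gα y) (gβ y) ≤ (C : ℝ≥0∞) * I := by
    intro y
    rw [edist_dist, dist_eq_norm]
    calc ENNReal.ofReal ‖gα y - gβ y‖
        ≤ ENNReal.ofReal ((C : ℝ) * ∫ p, dist p.1 p.2 ∂π) :=
          ENNReal.ofReal_le_ofReal (hKey y)
      _ = ENNReal.ofReal (C : ℝ) * ENNReal.ofReal (∫ p, dist p.1 p.2 ∂π) :=
          ENNReal.ofReal_mul C.coe_nonneg
      _ = (C : ℝ≥0∞) * I := by rw [hIeq, ENNReal.ofReal_coe_nnreal]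
  set m : EuclideanSpace ℝ (Fin q) × EuclideanSpace ℝ (Fin q) →
      EuclideanSpace ℝ (Fin r) × EuclideanSpace ℝ (Fin r) := fun p => (gα p.1, gβ p.2) with hm
  have hmm : Measurable m := (hmα.comp measurable_fst).prodMk (hmβ.comp measurable_snd)
  rw [W1]
  refine le_trans (iInf₂_le (π.map m) ⟨?_, ?_⟩) ?_
  · rw [lintegral_map (measurable_fst.edist measurable_snd) hmm]
    have h2C : (2 * C : ℝ≥0∞) ≤ 2 * r * C := by
      have h1 : (1 : ℝ≥0∞) ≤ (r : ℝ≥0∞) := by exact_mod_cast hr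
      calc (2 * C : ℝ≥0∞) = 2 * 1 * C := by rw [mul_one]
        _ ≤ 2 * r * C := mul_le_mul' (mul_le_mul' le_rfl h1) le_rfl
    calc ∫⁻ p, edist (m p).1 (m p).2 ∂π
        ≤ ∫⁻ p, ((C : ℝ≥0∞) * edist p.1 p.2 + (C : ℝ≥0∞) * I) ∂π := by
          refine lintegral_mono fun p => ?_
          refine le_trans (edist_triangle _ (gα p.2) _) (add_le_add ?_ (hKe p.2))
          exact hlipα.edist_le_mul _ _
      _ = (C : ℝ≥0∞) * I + (C : ℝ≥0∞) * I := by
          rw [lintegral_add_left ((measurable_fst.edist measurable_snd).const_mul _),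
            lintegral_const_mul _ (measurable_fst.edist measurable_snd),
            lintegral_const, measure_univ, mul_one, hI]
      _ = 2 * C * I := by ring
      _ ≤ 2 * r * C * I := mul_le_mul' h2C le_rfl
  · rw [Measure.map_map measurable_fst hmm, hEA, ← hπ1,
      Measure.map_map hmα measurable_fst]
    rfl
  · rw [Measure.map_map measurable_snd hmm, hEB, ← hπ2,
      Measure.map_map hmβ measurable_snd]
    rfl
end

section
/- For probability measures α, α' on a compact metric space X and β, β' on a compact metric space Y, the product measures satisfy W₁(α ⊗ β, α' ⊗ β') ≤ W₁(α, α') + W₁(β, β'), where X × Y is equipped with the sum (ℓ¹) metric. -/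
open MeasureTheory
open scoped ENNReal NNReal

/-- `W₁` on the product space `X × Y` equipped with the sum (ℓ¹) metric. -/
noncomputable def W1sum {X Y : Type*} [MeasurableSpace X] [PseudoEMetricSpace X]
    [MeasurableSpace Y] [PseudoEMetricSpace Y]
    (μ ν : Measure (X × Y)) : ℝ≥0∞ :=
  ⨅ (π : Measure ((X × Y) × (X × Y))) (_ : π.map Prod.fst = μ ∧ π.map Prod.snd = ν),
    ∫⁻ p, (edist p.1.1 p.2.1 + edist p.1.2 p.2.2) ∂π

/-! Gluing couplings `π₁` of `(α, α')` and `π₂` of `(β, β')` as the product `π₁ ⊗ π₂`, with the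
coordinates reshuffled, gives a coupling of `(α ⊗ β, α' ⊗ β')` whose ℓ¹ cost splits into the costs
of `π₁` and `π₂`; taking the infimum over `π₁` and `π₂` gives the bound. -/

theorem measurable_prodProdProdComm {X X' Y Y' : Type*} [MeasurableSpace X]
    [MeasurableSpace X'] [MeasurableSpace Y] [MeasurableSpace Y'] :
    Measurable (Equiv.prodProdProdComm X X' Y Y') :=
  (measurable_fst.fst.prodMk measurable_snd.fst).prodMk
    (measurable_fst.snd.prodMk measurable_snd.snd)

namespace MeasureTheory.Measure

variable {X X' Y Y' : Type*} [MeasurableSpace X] [MeasurableSpace X'] [MeasurableSpace Y]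
  [MeasurableSpace Y']

noncomputable def prodCoupling (π₁ : Measure (X × X')) (π₂ : Measure (Y × Y')) :
    Measure ((X × Y) × (X' × Y')) :=
  (π₁.prod π₂).map (Equiv.prodProdProdComm X X' Y Y')

variable (π₁ : Measure (X × X')) (π₂ : Measure (Y × Y'))

theorem map_fst_prodCoupling [SFinite π₁] [SFinite π₂] :
    (prodCoupling π₁ π₂).map Prod.fst = (π₁.map Prod.fst).prod (π₂.map Prod.fst) := by
  rw [prodCoupling, map_map measurable_fst measurable_prodProdProdComm,
    map_prod_map _ _ measurable_fst measurable_fst]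
  rfl

theorem map_snd_prodCoupling [SFinite π₁] [SFinite π₂] :
    (prodCoupling π₁ π₂).map Prod.snd = (π₁.map Prod.snd).prod (π₂.map Prod.snd) := by
  rw [prodCoupling, map_map measurable_snd measurable_prodProdProdComm,
    map_prod_map _ _ measurable_snd measurable_snd]
  rfl

theorem lintegral_prodCoupling_add [IsProbabilityMeasure π₁] [IsProbabilityMeasure π₂]
    {c₁ : X × X' → ℝ≥0∞} {c₂ : Y × Y' → ℝ≥0∞} (hc₁ : Measurable c₁) (hc₂ : Measurable c₂) :
    ∫⁻ p, c₁ (p.1.1, p.2.1) + c₂ (p.1.2, p.2.2) ∂prodCoupling π₁ π₂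
      = ∫⁻ q, c₁ q ∂π₁ + ∫⁻ q, c₂ q ∂π₂ := by
  rw [prodCoupling, lintegral_map (by fun_prop) measurable_prodProdProdComm]
  have h₁ := lintegral_prod_mul (μ := π₁) (ν := π₂) hc₁.aemeasurable aemeasurable_const (g := 1)
  have h₂ := lintegral_prod_mul (μ := π₁) (ν := π₂) aemeasurable_const hc₂.aemeasurable (f := 1)
  simp only [Pi.one_apply, mul_one, one_mul, lintegral_one, measure_univ] at h₁ h₂
  exact (lintegral_add_left (hc₁.comp measurable_fst) _).trans (congrArg₂ _ h₁ h₂)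

end MeasureTheory.Measure

theorem W1_prod_le_general {X Y : Type*}
    [MetricSpace X] [CompactSpace X] [MeasurableSpace X] [BorelSpace X]
    [MetricSpace Y] [CompactSpace Y] [MeasurableSpace Y] [BorelSpace Y]
    (α α' : Measure X) (β β' : Measure Y)
    [IsProbabilityMeasure α]
    [IsProbabilityMeasure β] :
    W1sum (α.prod β) (α'.prod β') ≤ W1 α α' + W1 β β' := by
  simp_rw [W1, ENNReal.iInf_add, ENNReal.add_iInf]
  refine le_iInf fun π₁ => le_iInf fun h₁ => le_iInf fun π₂ => le_iInf fun h₂ => ?_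
  have : IsProbabilityMeasure (π₁.map Prod.fst) := h₁.1 ▸ inferInstance
  have : IsProbabilityMeasure (π₂.map Prod.fst) := h₂.1 ▸ inferInstance
  have := Measure.isProbabilityMeasure_of_map (μ := π₁) Prod.fst
  have := Measure.isProbabilityMeasure_of_map (μ := π₂) Prod.fst
  refine iInf₂_le_of_le (Measure.prodCoupling π₁ π₂) ⟨?_, ?_⟩
    (Measure.lintegral_prodCoupling_add π₁ π₂ measurable_edist measurable_edist).le
  · rw [Measure.map_fst_prodCoupling, h₁.1, h₂.1]
  · rw [Measure.map_snd_prodCoupling, h₁.2, h₂.2]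

theorem W1_prod_le {X Y : Type*}
    [MetricSpace X] [CompactSpace X] [MeasurableSpace X] [BorelSpace X]
    [MetricSpace Y] [CompactSpace Y] [MeasurableSpace Y] [BorelSpace Y]
    (α α' : Measure X) (β β' : Measure Y)
    [IsProbabilityMeasure α] [IsProbabilityMeasure α']
    [IsProbabilityMeasure β] [IsProbabilityMeasure β'] :
    W1sum (α.prod β) (α'.prod β') ≤ W1 α α' + W1 β β' :=
  W1_prod_le_general α α' β β'
end

section
/- Let Ω ⊂ ℝ^q be compact and let F be a real-valued function on the space of Borel probability measures on Ω, continuous for the weak-* topology. Then for every ε > 0 there exist n ∈ ℕ and a continuous function φ : Ω^n → ℝ such that |F(μ) − ∫_{Ω^n} φ d μ^{⊗n}| ≤ ε for all probability measures μ on Ω. -/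
set_option linter.unusedSectionVars false
set_option linter.unusedVariables false
set_option maxHeartbeats 1000000

open MeasureTheory Filter Topology BoundedContinuousFunction Set
open scoped ENNReal NNReal

namespace TensorizationAux

section Lam

variable {X : Type*} [MetricSpace X] [CompactSpace X] [SecondCountableTopology X]
  [MeasurableSpace X] [BorelSpace X]

lemma integral_dist_le (g h : X →ᵇ ℝ) (μ : Measure X) [IsProbabilityMeasure μ] :
    |∫ x, g x ∂μ - ∫ x, h x ∂μ| ≤ dist g h := by
  rw [← integral_sub (g.integrable μ) (h.integrable μ)]
  have := norm_integral_le_of_norm_le_const (μ := μ) (C := dist g h)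
    (f := fun x => g x - h x) ?_
  · simpa [measure_univ] using this
  · exact Eventually.of_forall fun x => by
      simpa [Real.dist_eq] using dist_coe_le_dist (f := g) (g := h) x

variable (L : (X →ᵇ ℝ) → ℝ)

/-- test functions for a set: nonnegative, ≥ 1 on K -/
def TK (K : Set X) : Set (X →ᵇ ℝ) := {g | (∀ x, 0 ≤ g x) ∧ ∀ x ∈ K, 1 ≤ g x}

lemma one_mem_TK (K : Set X) : (1 : X →ᵇ ℝ) ∈ TK K :=
  ⟨fun x => by simp, fun x _ => by simp⟩

/-- the Riesz content value of a set -/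
noncomputable def lam (K : Set X) : ℝ := sInf (L '' TK K)

variable (hLmono : ∀ g h : X →ᵇ ℝ, (∀ x, g x ≤ h x) → L g ≤ L h)
  (hLsmul : ∀ (c : ℝ) (g : X →ᵇ ℝ), L (c • g) = c * L g)
  (hLadd : ∀ g h : X →ᵇ ℝ, L (g + h) = L g + L h)
  (hLone : L 1 = 1)

include hLmono hLsmul hLadd hLone

lemma L_zero : L 0 = 0 := by
  have : (0 : X →ᵇ ℝ) = (0 : ℝ) • (0 : X →ᵇ ℝ) := by simp
  rw [this, hLsmul]; ring

lemma L_nonneg_of_mem {K : Set X} {g : X →ᵇ ℝ} (hg : g ∈ TK K) : 0 ≤ L g := by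
  have h0 := L_zero L hLmono hLsmul hLadd hLone
  have := hLmono 0 g (fun x => by simpa using hg.1 x)
  linarith

lemma bddBelow_TK (K : Set X) : BddBelow (L '' TK K) := by
  refine ⟨0, fun y hy => ?_⟩
  obtain ⟨g, hg, rfl⟩ := hy
  exact L_nonneg_of_mem L hLmono hLsmul hLadd hLone hg

lemma lam_nonneg (K : Set X) : 0 ≤ lam L K :=
  le_csInf ⟨L 1, Set.mem_image_of_mem L (one_mem_TK K)⟩
    (fun y hy => by
      obtain ⟨g, hg, rfl⟩ := hy
      exact L_nonneg_of_mem L hLmono hLsmul hLadd hLone hg)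

lemma lam_le_L {K : Set X} {g : X →ᵇ ℝ} (hg : g ∈ TK K) : lam L K ≤ L g :=
  csInf_le (bddBelow_TK L hLmono hLsmul hLadd hLone K) (Set.mem_image_of_mem L hg)

lemma lam_mono {K₁ K₂ : Set X} (h : K₁ ⊆ K₂) : lam L K₁ ≤ lam L K₂ :=
  csInf_le_csInf (bddBelow_TK L hLmono hLsmul hLadd hLone K₁)
    ⟨L 1, Set.mem_image_of_mem L (one_mem_TK K₂)⟩
    (Set.image_mono fun g hg => ⟨hg.1, fun x hx => hg.2 x (h hx)⟩)

lemma lam_exists_lt {K : Set X} {ε : ℝ} (hε : 0 < ε) :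
    ∃ g ∈ TK K, L g < lam L K + ε := by
  obtain ⟨y, hy, hlt⟩ := exists_lt_of_csInf_lt
    (⟨L 1, Set.mem_image_of_mem L (one_mem_TK K)⟩ : (L '' TK K).Nonempty)
    (lt_add_of_pos_right (lam L K) hε)
  obtain ⟨g, hg, rfl⟩ := hy
  exact ⟨g, hg, hlt⟩

lemma lam_le_one (K : Set X) : lam L K ≤ 1 := by
  simpa [hLone] using lam_le_L L hLmono hLsmul hLadd hLone (one_mem_TK K)

lemma lam_univ : lam L (Set.univ : Set X) = 1 := by
  refine le_antisymm (lam_le_one L hLmono hLsmul hLadd hLone _) ?_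
  refine le_csInf ⟨L 1, Set.mem_image_of_mem L (one_mem_TK _)⟩ ?_
  rintro y ⟨g, hg, rfl⟩
  have := hLmono 1 g (fun x => by simpa using hg.2 x trivial)
  simpa [hLone] using this

lemma lam_union_le (K₁ K₂ : Set X) :
    lam L (K₁ ∪ K₂) ≤ lam L K₁ + lam L K₂ := by
  refine le_of_forall_pos_le_add fun ε hε => ?_
  obtain ⟨g₁, hg₁, hlt₁⟩ := lam_exists_lt L hLmono hLsmul hLadd hLone (K := K₁) (half_pos hε)
  obtain ⟨g₂, hg₂, hlt₂⟩ := lam_exists_lt L hLmono hLsmul hLadd hLone (K := K₂) (half_pos hε)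
  have hmem : g₁ + g₂ ∈ TK (K₁ ∪ K₂) := by
    constructor
    · intro x; simpa using add_nonneg (hg₁.1 x) (hg₂.1 x)
    · rintro x (hx | hx)
      · have := hg₂.1 x; have := hg₁.2 x hx; simp only [coe_add, Pi.add_apply]; linarith
      · have := hg₁.1 x; have := hg₂.2 x hx; simp only [coe_add, Pi.add_apply]; linarith
  calc lam L (K₁ ∪ K₂) ≤ L (g₁ + g₂) := lam_le_L L hLmono hLsmul hLadd hLone hmem
    _ = L g₁ + L g₂ := hLadd _ _
    _ ≤ lam L K₁ + ε / 2 + (lam L K₂ + ε / 2) := by linarith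
    _ = lam L K₁ + lam L K₂ + ε := by ring

lemma lam_union_disjoint (K₁ K₂ : Set X) (h₁ : IsClosed K₁) (h₂ : IsClosed K₂)
    (hd : Disjoint K₁ K₂) :
    lam L K₁ + lam L K₂ ≤ lam L (K₁ ∪ K₂) := by
  refine le_of_forall_pos_le_add fun ε hε => ?_
  obtain ⟨g, hg, hlt⟩ := lam_exists_lt L hLmono hLsmul hLadd hLone (K := K₁ ∪ K₂) hε
  obtain ⟨u, hu1, hu2, hu01⟩ := exists_bounded_zero_one_of_closed h₁ h₂ hd
  have hmem₁ : g * (1 - u) ∈ TK K₁ := by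
    constructor
    · intro x
      have := (hu01 x).2
      have := hg.1 x
      simp only [coe_mul, Pi.mul_apply, coe_sub, coe_one, Pi.sub_apply, Pi.one_apply]
      nlinarith
    · intro x hx
      have hu : u x = 0 := hu1 hx
      have := hg.2 x (Or.inl hx)
      simp only [coe_mul, Pi.mul_apply, coe_sub, coe_one, Pi.sub_apply, Pi.one_apply, hu]
      linarith
  have hmem₂ : g * u ∈ TK K₂ := by
    constructor
    · intro x
      have := (hu01 x).1
      have := hg.1 x
      simp only [coe_mul, Pi.mul_apply]
      nlinarith
    · intro x hx
      have hu : u x = 1 := by simpa using hu2 hx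
      have := hg.2 x (Or.inr hx)
      simp only [coe_mul, Pi.mul_apply, hu]
      linarith
  have key : g * (1 - u) + g * u = g := by ring
  calc lam L K₁ + lam L K₂ ≤ L (g * (1 - u)) + L (g * u) :=
        add_le_add (lam_le_L L hLmono hLsmul hLadd hLone hmem₁)
          (lam_le_L L hLmono hLsmul hLadd hLone hmem₂)
    _ = L (g * (1 - u) + g * u) := (hLadd _ _).symm
    _ = L g := by rw [key]
    _ ≤ lam L (K₁ ∪ K₂) + ε := hlt.le

/-- the Riesz content associated to L -/
noncomputable def rcontent : Content X where
  toFun K := (lam L K).toNNReal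
  mono' K₁ K₂ h := by
    simpa using Real.toNNReal_mono (lam_mono L hLmono hLsmul hLadd hLone h)
  sup_disjoint' K₁ K₂ hd h₁ h₂ := by
    have h1 := lam_union_disjoint L hLmono hLsmul hLadd hLone K₁ K₂ h₁ h₂ hd
    have h2 := lam_union_le L hLmono hLsmul hLadd hLone (K₁ : Set X) K₂
    have heq : lam L (↑K₁ ∪ ↑K₂) = lam L K₁ + lam L K₂ := le_antisymm h2 h1
    show (lam L ((K₁ ⊔ K₂ : TopologicalSpace.Compacts X) : Set X)).toNNReal = _
    have hco : ((K₁ ⊔ K₂ : TopologicalSpace.Compacts X) : Set X) = ↑K₁ ∪ ↑K₂ := rfl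
    rw [hco, heq, Real.toNNReal_add (lam_nonneg L hLmono hLsmul hLadd hLone _)
      (lam_nonneg L hLmono hLsmul hLadd hLone _)]
  sup_le' K₁ K₂ := by
    have h2 := lam_union_le L hLmono hLsmul hLadd hLone (K₁ : Set X) K₂
    show (lam L ((K₁ ⊔ K₂ : TopologicalSpace.Compacts X) : Set X)).toNNReal ≤ _
    have hco : ((K₁ ⊔ K₂ : TopologicalSpace.Compacts X) : Set X) = ↑K₁ ∪ ↑K₂ := rfl
    rw [hco]
    exact le_trans (Real.toNNReal_mono h2) Real.toNNReal_add_le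

lemma rcontent_apply (K : TopologicalSpace.Compacts X) :
    (rcontent L hLmono hLsmul hLadd hLone) K = ENNReal.ofReal (lam L (K : Set X)) := rfl

lemma rcontent_regular : (rcontent L hLmono hLsmul hLadd hLone).ContentRegular := by
  intro K
  refine le_antisymm (le_iInf fun K' => le_iInf fun hK' => ?_) ?_
  · show ((lam L (K : Set X)).toNNReal : ℝ≥0∞) ≤ ((lam L (K' : Set X)).toNNReal : ℝ≥0∞)
    exact ENNReal.coe_le_coe.mpr (Real.toNNReal_mono
      (lam_mono L hLmono hLsmul hLadd hLone (hK'.trans interior_subset)))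
  · refine ENNReal.le_of_forall_pos_le_add fun ε hε h_top => ?_
    set ε' : ℝ := min (ε : ℝ) 1 with hε'def
    have hε'pos : 0 < ε' := lt_min hε one_pos
    have hε'le1 : ε' ≤ 1 := min_le_right _ _
    set η : ℝ := min (ε' / 8) (1 / 2) with hη_def
    have hη_pos : 0 < η := lt_min (by positivity) one_half_pos
    have hη_le : η ≤ 1 / 2 := min_le_right _ _
    have hη_le' : η ≤ ε' / 8 := min_le_left _ _
    have h1η : (0:ℝ) < 1 - η := by linarith
    obtain ⟨g, hg, hlt⟩ := lam_exists_lt L hLmono hLsmul hLadd hLone (K := (K : Set X)) hη_pos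
    have hcl : IsClosed {x : X | 1 - η ≤ g x} :=
      isClosed_le continuous_const g.continuous
    set K' : TopologicalSpace.Compacts X := ⟨{x | 1 - η ≤ g x}, hcl.isCompact⟩ with hK'def
    have hKK' : (K : Set X) ⊆ interior (K' : Set X) := by
      have hopen : IsOpen {x : X | 1 - η < g x} := isOpen_lt continuous_const g.continuous
      have hsub : {x : X | 1 - η < g x} ⊆ (K' : Set X) := fun x hx =>
        Set.mem_setOf_eq ▸ le_of_lt (Set.mem_setOf_eq ▸ hx)
      refine subset_trans (fun x hx => ?_) (interior_maximal hsub hopen)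
      have := hg.2 x hx
      simp only [Set.mem_setOf_eq]
      linarith
    have hmem : (1 - η)⁻¹ • g ∈ TK (K' : Set X) := by
      constructor
      · intro x
        have := hg.1 x
        simp only [coe_smul, Pi.smul_apply, smul_eq_mul]
        positivity
      · intro x hx
        have hx' : 1 - η ≤ g x := hx
        simp only [coe_smul, Pi.smul_apply, smul_eq_mul]
        have h3 : (1-η)⁻¹ * (1-η) ≤ (1-η)⁻¹ * g x :=
          mul_le_mul_of_nonneg_left hx' (by positivity)
        rwa [inv_mul_cancel₀ h1η.ne'] at h3
    have hlamK' : lam L (K' : Set X) ≤ lam L (K : Set X) + ε' := by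
      have h4 : lam L (K' : Set X) ≤ L ((1 - η)⁻¹ • g) :=
        lam_le_L L hLmono hLsmul hLadd hLone hmem
      rw [hLsmul] at h4
      have h5 : L g ≤ lam L (K : Set X) + η := hlt.le
      have hlamnn : 0 ≤ lam L (K : Set X) := lam_nonneg L hLmono hLsmul hLadd hLone _
      have hlam1 : lam L (K : Set X) ≤ 1 := lam_le_one L hLmono hLsmul hLadd hLone _
      have h6 : (1 - η)⁻¹ * L g ≤ (1 - η)⁻¹ * (lam L (K : Set X) + η) :=
        mul_le_mul_of_nonneg_left h5 (by positivity)
      refine h4.trans (h6.trans ?_)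
      rw [inv_mul_le_iff₀ h1η]
      nlinarith
    refine (iInf_le_of_le K' (iInf_le_of_le hKK' le_rfl)).trans ?_
    show ((lam L (K' : Set X)).toNNReal : ℝ≥0∞) ≤ ((lam L (K : Set X)).toNNReal : ℝ≥0∞) + ε
    calc ((lam L (K' : Set X)).toNNReal : ℝ≥0∞)
        ≤ ((lam L (K : Set X) + ε').toNNReal : ℝ≥0∞) := by
          exact_mod_cast Real.toNNReal_mono hlamK'
      _ ≤ (((lam L (K : Set X)).toNNReal + ε'.toNNReal : ℝ≥0) : ℝ≥0∞) := by
          exact_mod_cast Real.toNNReal_add_le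
      _ ≤ ((lam L (K : Set X)).toNNReal : ℝ≥0∞) + ε := by
          rw [ENNReal.coe_add]
          refine add_le_add_right ?_ _
          have : ε'.toNNReal ≤ ε := by
            have : ε' ≤ (ε : ℝ) := min_le_left _ _
            simpa using Real.toNNReal_mono this
          exact_mod_cast this

lemma rcontent_measure_univ :
    (rcontent L hLmono hLsmul hLadd hLone).measure Set.univ = 1 := by
  rw [Content.measure_apply _ MeasurableSet.univ,
    show (Set.univ : Set X) = ((⟨Set.univ, isOpen_univ⟩ : TopologicalSpace.Opens X) : Set X)
      from rfl, Content.outerMeasure_opens]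
  refine le_antisymm ?_ ?_
  · refine le_trans (Content.innerContent_le _ _ ⟨Set.univ, isCompact_univ⟩ (by simp)) ?_
    rw [rcontent_apply]
    show ENNReal.ofReal (lam L (Set.univ : Set X)) ≤ 1
    rw [lam_univ L hLmono hLsmul hLadd hLone]
    simp
  · refine le_trans ?_ (Content.le_innerContent _ ⟨Set.univ, isCompact_univ⟩ _ (by simp))
    rw [rcontent_apply]
    show (1:ℝ≥0∞) ≤ ENNReal.ofReal (lam L (Set.univ : Set X))
    rw [lam_univ L hLmono hLsmul hLadd hLone]
    simp

variable (ν : ℕ → ProbabilityMeasure X)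
  (hL : ∀ g : X →ᵇ ℝ, Tendsto (fun j => ∫ x, g x ∂(ν j : Measure X)) atTop (𝓝 (L g)))

include hL

lemma limsup_closed_le (F : Set X) (hF : IsClosed F) :
    atTop.limsup (fun j => (ν j : Measure X) F)
      ≤ (rcontent L hLmono hLsmul hLadd hLone).measure F := by
  have hmeq : (rcontent L hLmono hLsmul hLadd hLone).measure F = ENNReal.ofReal (lam L F) := by
    rw [show F = (⟨F, hF.isCompact⟩ : TopologicalSpace.Compacts X) from rfl] at *
    rw [Content.measure_eq_content_of_regular _
      (rcontent_regular L hLmono hLsmul hLadd hLone), rcontent_apply]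
  rw [hmeq]
  have key : ∀ {ε : ℝ}, 0 < ε →
      atTop.limsup (fun j => (ν j : Measure X) F) ≤ ENNReal.ofReal (lam L F + ε) := by
    intro ε hε
    obtain ⟨g, hg, hlt⟩ := lam_exists_lt L hLmono hLsmul hLadd hLone (K := F) hε
    have hbound : ∀ j, (ν j : Measure X) F ≤ ENNReal.ofReal (∫ x, g x ∂(ν j : Measure X)) := by
      intro j
      have hind : ∫ x, F.indicator (1 : X → ℝ) x ∂(ν j : Measure X)
          = ((ν j : Measure X) F).toReal := integral_indicator_one hF.measurableSet
      have hmono2 : ∫ x, F.indicator (1 : X → ℝ) x ∂(ν j : Measure X)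
          ≤ ∫ x, g x ∂(ν j : Measure X) := by
        refine integral_mono ?_ (g.integrable _) ?_
        · rw [integrable_indicator_iff hF.measurableSet]
          exact integrableOn_const (measure_lt_top _ _).ne
        · intro x
          by_cases hx : x ∈ F
          · simp only [Set.indicator_of_mem hx, Pi.one_apply]
            exact hg.2 x hx
          · simp only [Set.indicator_of_notMem hx]
            exact hg.1 x
      calc (ν j : Measure X) F = ENNReal.ofReal (((ν j : Measure X) F).toReal) := by
            rw [ENNReal.ofReal_toReal (measure_lt_top _ _).ne]
        _ ≤ ENNReal.ofReal (∫ x, g x ∂(ν j : Measure X)) := by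
            apply ENNReal.ofReal_le_ofReal
            rw [← hind]; exact hmono2
    have hlim : atTop.limsup (fun j => ENNReal.ofReal (∫ x, g x ∂(ν j : Measure X)))
        = ENNReal.ofReal (L g) :=
      ((ENNReal.continuous_ofReal.continuousAt).tendsto.comp (hL g)).limsup_eq
    calc atTop.limsup (fun j => (ν j : Measure X) F)
        ≤ atTop.limsup (fun j => ENNReal.ofReal (∫ x, g x ∂(ν j : Measure X))) :=
          limsup_le_limsup (Eventually.of_forall hbound)
      _ = ENNReal.ofReal (L g) := hlim
      _ ≤ ENNReal.ofReal (lam L F + ε) := ENNReal.ofReal_le_ofReal hlt.le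
  refine ENNReal.le_of_forall_pos_le_add fun ε hε h_top => ?_
  refine (key (ε := ε) (by exact_mod_cast hε)).trans ?_
  rw [ENNReal.ofReal_add (lam_nonneg L hLmono hLsmul hLadd hLone _) (by positivity)]
  simp

end Lam

section Conv

variable {X : Type*} [MetricSpace X] [CompactSpace X] [SecondCountableTopology X]
  [MeasurableSpace X] [BorelSpace X]

lemma tendsto_of_limsup_closed (ν : ℕ → ProbabilityMeasure X) (κ₀ : Measure X)
    [IsProbabilityMeasure κ₀]
    (hclosed : ∀ F : Set X, IsClosed F →
      atTop.limsup (fun j => (ν j : Measure X) F) ≤ κ₀ F) :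
    Tendsto (fun j => ν j) atTop (𝓝 (⟨κ₀, inferInstance⟩ : ProbabilityMeasure X)) := by
  set κ : ProbabilityMeasure X := ⟨κ₀, inferInstance⟩ with hκ
  apply tendsto_of_forall_isOpen_le_liminf
  intro G hG
  have hopen : κ₀ G ≤ atTop.liminf (fun j => (ν j : Measure X) G) := by
    refine le_measure_liminf_of_limsup_measure_compl_le hG.measurableSet ?_
    exact hclosed Gᶜ hG.isClosed_compl
  have aux : (ENNReal.ofNNReal (atTop.liminf fun j ↦ ν j G)) =
      atTop.liminf (fun j => ((ν j G : ℝ≥0) : ℝ≥0∞)) := by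
    refine Monotone.map_liminf_of_continuousAt (F := atTop) ENNReal.coe_mono (fun j => ν j G)
      ENNReal.continuous_coe.continuousAt ?_ ?_
    · exact IsBoundedUnder.isCoboundedUnder_ge ⟨1, by
        simp only [eventually_map, eventually_atTop]
        exact ⟨0, fun j _ => ProbabilityMeasure.apply_le_one _ _⟩⟩
    · exact ⟨0, by simp⟩
  rw [← ENNReal.coe_le_coe, aux]
  simp only [ProbabilityMeasure.ennreal_coeFn_eq_coeFn_toMeasure]
  exact hopen

lemma exists_subseq_integral_tendsto (μ : ℕ → ProbabilityMeasure X) :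
    ∃ (φ : ℕ → ℕ) (L : (X →ᵇ ℝ) → ℝ), StrictMono φ ∧
      ∀ g : X →ᵇ ℝ, Tendsto (fun j => ∫ x, g x ∂(μ (φ j) : Measure X)) atTop (𝓝 (L g)) := by
  haveI : TopologicalSpace.SeparableSpace C(X, ℝ) := inferInstance
  have hdr : DenseRange (fun h : C(X, ℝ) => (BoundedContinuousFunction.mkOfCompact h : X →ᵇ ℝ)) :=
    (ContinuousMap.equivBoundedOfCompact X ℝ).surjective.denseRange
  haveI : TopologicalSpace.SeparableSpace (X →ᵇ ℝ) :=
    hdr.separableSpace (ContinuousMap.isometryEquivBoundedOfCompact X ℝ).isometry.continuous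
  obtain ⟨f, hf⟩ := TopologicalSpace.exists_dense_seq (X →ᵇ ℝ)
  set S := Set.univ.pi (fun k : ℕ => Icc (-‖f k‖) ‖f k‖) with hS_def
  have hScompact : IsCompact S := isCompact_univ_pi fun k => isCompact_Icc
  set y : ℕ → ℕ → ℝ := fun n k => ∫ x, f k x ∂(μ n : Measure X) with hy_def
  have hy : ∀ n, y n ∈ S := by
    intro n k _
    have h1 : ‖∫ x, f k x ∂(μ n : Measure X)‖ ≤ ‖f k‖ := by
      have := norm_integral_le_of_norm_le_const (μ := (μ n : Measure X)) (C := ‖f k‖)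
        (f := fun x => f k x)
        (Eventually.of_forall fun x => (f k).norm_coe_le_norm x)
      simpa [measure_univ] using this
    rw [Real.norm_eq_abs, abs_le] at h1
    exact ⟨h1.1, h1.2⟩
  obtain ⟨c, -, φ, hφmono, hφ⟩ := hScompact.tendsto_subseq hy
  have hcoord : ∀ k, Tendsto (fun j => ∫ x, f k x ∂(μ (φ j) : Measure X)) atTop (𝓝 (c k)) := by
    intro k
    exact (continuous_apply k).continuousAt.tendsto.comp hφ
  have hcauchy : ∀ g : X →ᵇ ℝ, CauchySeq (fun j => ∫ x, g x ∂(μ (φ j) : Measure X)) := by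
    intro g
    rw [Metric.cauchySeq_iff]
    intro ε hε
    obtain ⟨k, hk⟩ := Metric.denseRange_iff.mp hf g (ε / 4) (by positivity)
    obtain ⟨N, hN⟩ := Metric.cauchySeq_iff.mp (hcoord k).cauchySeq (ε / 2) (by positivity)
    refine ⟨N, fun m hm n hn => ?_⟩
    have h3 := hN m hm n hn
    rw [Real.dist_eq] at h3 ⊢
    have ha := integral_dist_le g (f k) (μ (φ m) : Measure X)
    have hb := integral_dist_le (f k) g (μ (φ n) : Measure X)
    have hcomm : dist (f k) g = dist g (f k) := dist_comm _ _
    calc |∫ x, g x ∂(μ (φ m) : Measure X) - ∫ x, g x ∂(μ (φ n) : Measure X)|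
        ≤ |∫ x, g x ∂(μ (φ m) : Measure X) - ∫ x, f k x ∂(μ (φ m) : Measure X)|
          + |∫ x, f k x ∂(μ (φ m) : Measure X) - ∫ x, f k x ∂(μ (φ n) : Measure X)|
          + |∫ x, f k x ∂(μ (φ n) : Measure X) - ∫ x, g x ∂(μ (φ n) : Measure X)| := by
            have := abs_sub_le (∫ x, g x ∂(μ (φ m) : Measure X))
              (∫ x, f k x ∂(μ (φ n) : Measure X)) (∫ x, g x ∂(μ (φ n) : Measure X))
            have := abs_sub_le (∫ x, g x ∂(μ (φ m) : Measure X))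
              (∫ x, f k x ∂(μ (φ m) : Measure X)) (∫ x, f k x ∂(μ (φ n) : Measure X))
            linarith
      _ < ε := by linarith
  refine ⟨φ, fun g => limUnder atTop (fun j => ∫ x, g x ∂(μ (φ j) : Measure X)), hφmono, ?_⟩
  intro g
  exact (hcauchy g).tendsto_limUnder

lemma exists_subseq_tendsto_probabilityMeasure (μ : ℕ → ProbabilityMeasure X) :
    ∃ (κ : ProbabilityMeasure X) (φ : ℕ → ℕ), StrictMono φ ∧
      Tendsto (fun j => μ (φ j)) atTop (𝓝 κ) := by
  obtain ⟨φ, L, hφmono, hL⟩ := exists_subseq_integral_tendsto μ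
  set ν : ℕ → ProbabilityMeasure X := fun j => μ (φ j) with hν
  -- properties of L
  have hLmono : ∀ g h : X →ᵇ ℝ, (∀ x, g x ≤ h x) → L g ≤ L h := by
    intro g h hgh
    exact le_of_tendsto_of_tendsto' (hL g) (hL h) fun j =>
      integral_mono (g.integrable _) (h.integrable _) hgh
  have hLsmul : ∀ (c : ℝ) (g : X →ᵇ ℝ), L (c • g) = c * L g := by
    intro c g
    refine tendsto_nhds_unique (hL (c • g)) ?_
    have : (fun j => ∫ x, (c • g) x ∂(ν j : Measure X))
        = fun j => c * ∫ x, g x ∂(ν j : Measure X) := by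
      funext j
      simp only [coe_smul, Pi.smul_apply, smul_eq_mul]
      rw [integral_const_mul]
    rw [this]
    exact (hL g).const_mul c
  have hLadd : ∀ g h : X →ᵇ ℝ, L (g + h) = L g + L h := by
    intro g h
    refine tendsto_nhds_unique (hL (g + h)) ?_
    have : (fun j => ∫ x, (g + h) x ∂(ν j : Measure X))
        = fun j => (∫ x, g x ∂(ν j : Measure X)) + ∫ x, h x ∂(ν j : Measure X) := by
      funext j
      simp only [coe_add, Pi.add_apply]
      rw [integral_add (g.integrable _) (h.integrable _)]
    rw [this]
    exact (hL g).add (hL h)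
  have hLone : L 1 = 1 := by
    refine tendsto_nhds_unique (hL 1) ?_
    have : (fun j => ∫ x, (1 : X →ᵇ ℝ) x ∂(ν j : Measure X)) = fun _ => (1:ℝ) := by
      funext j
      simp [measure_univ]
    rw [this]
    exact tendsto_const_nhds
  -- the limit measure
  set κ₀ : Measure X := (rcontent L hLmono hLsmul hLadd hLone).measure with hκ₀
  haveI : IsProbabilityMeasure κ₀ :=
    ⟨rcontent_measure_univ L hLmono hLsmul hLadd hLone⟩
  refine ⟨⟨κ₀, inferInstance⟩, φ, hφmono, ?_⟩
  exact tendsto_of_limsup_closed ν κ₀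
    (fun F hF => limsup_closed_le L hLmono hLsmul hLadd hLone ν hL F hF)

lemma compactSpace_probabilityMeasure : CompactSpace (ProbabilityMeasure X) := by
  haveI : TopologicalSpace.MetrizableSpace (ProbabilityMeasure X) := inferInstance
  letI : MetricSpace (ProbabilityMeasure X) := TopologicalSpace.metrizableSpaceMetric _
  rw [compactSpace_iff_seqCompactSpace]
  constructor
  intro x _
  obtain ⟨κ, φ, hmono, hconv⟩ := exists_subseq_tendsto_probabilityMeasure x
  exact ⟨κ, trivial, φ, hmono, hconv⟩

end Conv

section SW

variable {X : Type*} [MetricSpace X] [CompactSpace X] [SecondCountableTopology X]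
  [MeasurableSpace X] [BorelSpace X]

lemma cont_integrable {Y : Type*} [TopologicalSpace Y] [CompactSpace Y] [MeasurableSpace Y]
    [OpensMeasurableSpace Y] {f : Y → ℝ} (hf : Continuous f) (ρ : Measure Y)
    [IsFiniteMeasure ρ] : Integrable f ρ :=
  (BoundedContinuousFunction.mkOfCompact (⟨f, hf⟩ : C(Y, ℝ))).integrable ρ

-- measure preserving splitting of pi measures
lemma pi_split (μ : Measure X) [IsProbabilityMeasure μ] (m n : ℕ) :
    ∃ E : (Fin (m + n) → X) ≃ᵐ (Fin m → X) × (Fin n → X),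
      MeasurePreserving E (Measure.pi fun _ => μ)
        ((Measure.pi fun _ : Fin m => μ).prod (Measure.pi fun _ : Fin n => μ)) ∧
      ∀ (x : Fin (m + n) → X),
        (E x).1 = (fun i => x (Fin.castAdd n i)) ∧ (E x).2 = fun j => x (Fin.natAdd m j) := by
  let e₁ := MeasurableEquiv.piCongrLeft (fun _ : Fin (m + n) => X) finSumFinEquiv
  let e₂ := MeasurableEquiv.sumPiEquivProdPi (fun _ : Fin m ⊕ Fin n => X)
  refine ⟨e₁.symm.trans e₂, ?_, ?_⟩
  · have h₁ : MeasurePreserving e₁ (Measure.pi fun _ : Fin m ⊕ Fin n => μ)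
        (Measure.pi fun _ : Fin (m+n) => μ) :=
      measurePreserving_piCongrLeft (fun _ => μ) finSumFinEquiv
    have h₂ : MeasurePreserving e₂ (Measure.pi fun _ : Fin m ⊕ Fin n => μ)
        ((Measure.pi fun _ : Fin m => μ).prod (Measure.pi fun _ : Fin n => μ)) :=
      measurePreserving_sumPiEquivProdPi (fun _ => μ)
    exact h₂.comp h₁.symm
  · intro x
    constructor
    · funext i
      simp only [MeasurableEquiv.trans_apply]
      rfl
    · funext j
      simp only [MeasurableEquiv.trans_apply]
      rfl

lemma integral_pi_mul (μ : Measure X) [IsProbabilityMeasure μ] {m n : ℕ}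
    {ψ : (Fin m → X) → ℝ} {χ : (Fin n → X) → ℝ} (hψ : Continuous ψ) (hχ : Continuous χ) :
    ∫ x : Fin (m + n) → X,
        ψ (fun i => x (Fin.castAdd n i)) * χ (fun j => x (Fin.natAdd m j))
        ∂(Measure.pi fun _ => μ)
      = (∫ y, ψ y ∂(Measure.pi fun _ : Fin m => μ)) *
        (∫ z, χ z ∂(Measure.pi fun _ : Fin n => μ)) := by
  obtain ⟨E, hE, hEapp⟩ := pi_split μ m n
  calc ∫ x : Fin (m + n) → X,
        ψ (fun i => x (Fin.castAdd n i)) * χ (fun j => x (Fin.natAdd m j))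
        ∂(Measure.pi fun _ => μ)
      = ∫ x : Fin (m + n) → X, (fun p : (Fin m → X) × (Fin n → X) => ψ p.1 * χ p.2) (E x)
          ∂(Measure.pi fun _ => μ) := by
        refine integral_congr_ae (Eventually.of_forall fun x => ?_)
        show _ = ψ (E x).1 * χ (E x).2
        rw [(hEapp x).1, (hEapp x).2]
    _ = ∫ p, ψ p.1 * χ p.2
          ∂((Measure.pi fun _ : Fin m => μ).prod (Measure.pi fun _ : Fin n => μ)) :=
        hE.integral_comp E.measurableEmbedding (fun p => ψ p.1 * χ p.2)
    _ = _ := integral_prod_mul ψ χ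

lemma integral_pi_front (μ : Measure X) [IsProbabilityMeasure μ] {m : ℕ} (n : ℕ)
    {ψ : (Fin m → X) → ℝ} (hψ : Continuous ψ) :
    ∫ x : Fin (m + n) → X, ψ (fun i => x (Fin.castAdd n i)) ∂(Measure.pi fun _ => μ)
      = ∫ y, ψ y ∂(Measure.pi fun _ : Fin m => μ) := by
  have := integral_pi_mul μ (hψ := hψ) (χ := fun _ : Fin n → X => (1:ℝ)) continuous_const
  simpa using this

lemma integral_pi_back (μ : Measure X) [IsProbabilityMeasure μ] (m : ℕ) {n : ℕ}
    {χ : (Fin n → X) → ℝ} (hχ : Continuous χ) :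
    ∫ x : Fin (m + n) → X, χ (fun j => x (Fin.natAdd m j)) ∂(Measure.pi fun _ => μ)
      = ∫ y, χ y ∂(Measure.pi fun _ : Fin n => μ) := by
  have := integral_pi_mul μ (ψ := fun _ : Fin m → X => (1:ℝ)) continuous_const (hχ := hχ)
  simpa using this

lemma integral_pi_add (μ : Measure X) [IsProbabilityMeasure μ] {m n : ℕ}
    {ψ : (Fin m → X) → ℝ} {χ : (Fin n → X) → ℝ} (hψ : Continuous ψ) (hχ : Continuous χ) :
    ∫ x : Fin (m + n) → X,
        (ψ (fun i => x (Fin.castAdd n i)) + χ (fun j => x (Fin.natAdd m j)))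
        ∂(Measure.pi fun _ => μ)
      = (∫ y, ψ y ∂(Measure.pi fun _ : Fin m => μ)) +
        (∫ z, χ z ∂(Measure.pi fun _ : Fin n => μ)) := by
  have hc1 : Continuous fun x : Fin (m+n) → X => ψ (fun i => x (Fin.castAdd n i)) :=
    hψ.comp (continuous_pi fun i => continuous_apply _)
  have hc2 : Continuous fun x : Fin (m+n) → X => χ (fun j => x (Fin.natAdd m j)) :=
    hχ.comp (continuous_pi fun j => continuous_apply _)
  rw [integral_add (cont_integrable hc1 _) (cont_integrable hc2 _),
    integral_pi_front μ n hψ, integral_pi_back μ m hχ]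

end SW

end TensorizationAux


theorem tensorization_universality {q : ℕ}
    (Ω : Set (EuclideanSpace ℝ (Fin q))) (hΩ : IsCompact Ω)
    (F : ProbabilityMeasure Ω → ℝ) (hF : Continuous F)
    (ε : ℝ) (hε : 0 < ε) :
    ∃ (n : ℕ) (φ : (Fin n → Ω) → ℝ), Continuous φ ∧
      ∀ μ : ProbabilityMeasure Ω,
        |F μ - ∫ x, φ x ∂(Measure.pi fun _ : Fin n => (μ : Measure Ω))| ≤ ε := by
  haveI : CompactSpace Ω := isCompact_iff_compactSpace.mp hΩ
  haveI : CompactSpace (ProbabilityMeasure Ω) := TensorizationAux.compactSpace_probabilityMeasure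
  -- the generators
  set gen : (Ω →ᵇ ℝ) → C(ProbabilityMeasure Ω, ℝ) := fun f =>
    ⟨fun μ => ∫ x, f x ∂(μ : Measure Ω),
      ProbabilityMeasure.continuous_integral_boundedContinuousFunction f⟩ with hgen
  set A : Subalgebra ℝ C(ProbabilityMeasure Ω, ℝ) := Algebra.adjoin ℝ (Set.range gen) with hA
  -- separates points
  have hsep : A.SeparatesPoints := by
    intro μ ν hμν
    by_contra hcon
    push_neg at hcon
    apply hμν
    have hall : ∀ f : Ω →ᵇ ℝ, ∫ x, f x ∂(μ : Measure Ω) = ∫ x, f x ∂(ν : Measure Ω) := by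
      intro f
      have hmem : (gen f : C(ProbabilityMeasure Ω, ℝ)) ∈ (A : Set C(ProbabilityMeasure Ω, ℝ)) :=
        Algebra.subset_adjoin ⟨f, rfl⟩
      have := hcon _ ⟨gen f, hmem, rfl⟩
      simpa [hgen] using this
    have h1 : Tendsto (fun _ : ℕ => μ) atTop (𝓝 ν) := by
      refine ProbabilityMeasure.tendsto_iff_forall_integral_tendsto.mpr fun g => ?_
      rw [show (fun _ : ℕ => ∫ x, g x ∂(μ : Measure Ω)) = fun _ : ℕ => ∫ x, g x ∂(ν : Measure Ω)
        from funext fun _ => hall g]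
      exact tendsto_const_nhds
    exact tendsto_nhds_unique tendsto_const_nhds h1
  -- Stone-Weierstrass
  have htop := ContinuousMap.subalgebra_topologicalClosure_eq_top_of_separatesPoints A hsep
  have hFmem : (⟨F, hF⟩ : C(ProbabilityMeasure Ω, ℝ)) ∈ A.topologicalClosure := by
    rw [htop]; trivial
  have hFcl : (⟨F, hF⟩ : C(ProbabilityMeasure Ω, ℝ)) ∈
      closure (A : Set C(ProbabilityMeasure Ω, ℝ)) := hFmem
  obtain ⟨g, hgA, hdist⟩ := Metric.mem_closure_iff.mp hFcl ε hε
  -- every element of A is a tensorized integral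
  have hrep : ∀ g ∈ A, ∃ (n : ℕ) (φ : C((Fin n → Ω), ℝ)), ∀ μ : ProbabilityMeasure Ω,
      g μ = ∫ x, φ x ∂(Measure.pi fun _ : Fin n => (μ : Measure Ω)) := by
    intro g hg
    induction hg using Algebra.adjoin_induction with
    | mem g hg =>
      obtain ⟨f, rfl⟩ := hg
      refine ⟨1, ⟨fun x => f (x 0), f.continuous.comp (continuous_apply 0)⟩, fun μ => ?_⟩
      have mp := measurePreserving_funUnique (μ : Measure Ω) (Fin 1)
      have := mp.integral_comp (MeasurableEquiv.funUnique (Fin 1) Ω).measurableEmbedding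
        (fun y => f y)
      simp only [hgen, ContinuousMap.coe_mk]
      rw [← this]
      rfl
    | algebraMap r =>
      refine ⟨0, ⟨fun _ => r, continuous_const⟩, fun μ => ?_⟩
      haveI : IsProbabilityMeasure (Measure.pi fun _ : Fin 0 => (μ : Measure Ω)) :=
        inferInstance
      simp [Algebra.algebraMap_eq_smul_one, integral_const]
    | add g₁ g₂ hg₁ hg₂ ih₁ ih₂ =>
      obtain ⟨m, φ₁, hφ₁⟩ := ih₁
      obtain ⟨n, φ₂, hφ₂⟩ := ih₂
      refine ⟨m + n, ⟨fun x => φ₁ (fun i => x (Fin.castAdd n i))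
        + φ₂ (fun j => x (Fin.natAdd m j)), ?_⟩, fun μ => ?_⟩
      · exact (φ₁.continuous.comp (continuous_pi fun i => continuous_apply (Fin.castAdd n i))).add
          (φ₂.continuous.comp (continuous_pi fun j => continuous_apply (Fin.natAdd m j)))
      · have := TensorizationAux.integral_pi_add (μ : Measure Ω) (m := m) (n := n)
          φ₁.continuous φ₂.continuous
        simp only [ContinuousMap.add_apply, ContinuousMap.coe_mk]
        rw [hφ₁ μ, hφ₂ μ, ← this]
    | mul g₁ g₂ hg₁ hg₂ ih₁ ih₂ =>
      obtain ⟨m, φ₁, hφ₁⟩ := ih₁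
      obtain ⟨n, φ₂, hφ₂⟩ := ih₂
      refine ⟨m + n, ⟨fun x => φ₁ (fun i => x (Fin.castAdd n i))
        * φ₂ (fun j => x (Fin.natAdd m j)), ?_⟩, fun μ => ?_⟩
      · exact (φ₁.continuous.comp (continuous_pi fun i => continuous_apply (Fin.castAdd n i))).mul
          (φ₂.continuous.comp (continuous_pi fun j => continuous_apply (Fin.natAdd m j)))
      · have := TensorizationAux.integral_pi_mul (μ : Measure Ω) (m := m) (n := n)
          φ₁.continuous φ₂.continuous
        simp only [ContinuousMap.mul_apply, ContinuousMap.coe_mk]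
        rw [hφ₁ μ, hφ₂ μ, ← this]
  obtain ⟨n, φcm, hφcm⟩ := hrep g hgA
  refine ⟨n, φcm, φcm.continuous, fun μ => ?_⟩
  have h1 : F μ = (⟨F, hF⟩ : C(ProbabilityMeasure Ω, ℝ)) μ := rfl
  have h2 := ContinuousMap.dist_apply_le_dist (f := (⟨F, hF⟩ : C(ProbabilityMeasure Ω, ℝ)))
    (g := g) μ
  rw [Real.dist_eq] at h2
  rw [h1, ← hφcm μ]
  exact h2.trans hdist.le
end
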